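/- For n ≥ 1, the three intervals of possible AGMY decoded values are disjoint: if x = c₋·(3(n+1))⁻¹ + c₀ + c₊·(3(n+1)) with nonnegative integers c₋, c₀, c₊ each at most 2n and not all zero, then from x one can recover whether c₋ ≥ 1 (the fractional part of x times 3(n+1) lies in [1, 2n]), whether c₊ ≥ 1 (the integer part of x/(3(n+1)) lies in [1, 2n]), and whether c₀ ≥ 1 (the integer part of x modulo 3(n+1) lies in (0, 3n]). -/
import Mathlib


theorem agmy_detection (n : ℕ) (hn : 1 ≤ n) (cneg c0 cpos : ℕ)
    (hneg : cneg ≤ 2 * n) (h0 : c0 ≤ 2 * n) (hpos : cpos ≤ 2 * n)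
    (hnz : ¬ (cneg = 0 ∧ c0 = 0 ∧ cpos = 0)) (x : ℝ)
    (hx : x = (cneg : ℝ) / (3 * ((n : ℝ) + 1)) + (c0 : ℝ) +
      (cpos : ℝ) * (3 * ((n : ℝ) + 1))) :
    (1 ≤ cneg ↔ Int.fract x * (3 * ((n : ℝ) + 1)) ∈ Set.Icc (1 : ℝ) (2 * n)) ∧
    (1 ≤ cpos ↔ ⌊x / (3 * ((n : ℝ) + 1))⌋ ∈ Set.Icc (1 : ℤ) (2 * n)) ∧
    (1 ≤ c0 ↔ ⌊x⌋ % (3 * ((n : ℤ) + 1)) ∈ Set.Ioc (0 : ℤ) (3 * n)) := by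
  have hn' : (1:ℝ) ≤ (n:ℝ) := by exact_mod_cast hn
  have hNpos : (0:ℝ) < 3 * ((n:ℝ) + 1) := by positivity
  have hneg' : (cneg:ℝ) ≤ 2 * n := by exact_mod_cast hneg
  have h0' : (c0:ℝ) ≤ 2 * n := by exact_mod_cast h0
  have hpos' : (cpos:ℝ) ≤ 2 * n := by exact_mod_cast hpos
  have hcneg_lt : (cneg:ℝ) < 3 * ((n:ℝ) + 1) := by nlinarith
  have hfrac_nonneg : 0 ≤ (cneg:ℝ) / (3 * ((n:ℝ) + 1)) := by positivity
  have hfrac_lt : (cneg:ℝ) / (3 * ((n:ℝ) + 1)) < 1 := by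
    rw [div_lt_one hNpos]; exact hcneg_lt
  have hfloor : ⌊x⌋ = (c0:ℤ) + (cpos:ℤ) * (3 * ((n:ℤ) + 1)) := by
    rw [Int.floor_eq_iff]
    constructor
    · rw [hx]; push_cast; nlinarith
    · rw [hx]; push_cast; nlinarith
  have hfract : Int.fract x = (cneg:ℝ) / (3 * ((n:ℝ) + 1)) := by
    rw [Int.fract, hfloor, hx]; push_cast; ring
  have hfloor2 : ⌊x / (3 * ((n:ℝ) + 1))⌋ = (cpos:ℤ) := by
    rw [Int.floor_eq_iff]
    constructor
    · rw [hx, le_div_iff₀ hNpos]; push_cast; nlinarith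
    · rw [hx, div_lt_iff₀ hNpos]; push_cast; nlinarith
  have hmod : ⌊x⌋ % (3 * ((n:ℤ) + 1)) = (c0:ℤ) := by
    rw [hfloor, Int.add_mul_emod_self_right]
    apply Int.emod_eq_of_lt
    · positivity
    · omega
  refine ⟨?_, ?_, ?_⟩
  · rw [hfract, div_mul_cancel₀ _ (ne_of_gt hNpos)]
    constructor
    · intro h
      exact ⟨by exact_mod_cast h, hneg'⟩
    · rintro ⟨h1, -⟩
      exact_mod_cast Nat.one_le_cast.mp (by exact_mod_cast h1)
  · rw [hfloor2]
    constructor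
    · intro h
      exact ⟨by exact_mod_cast h, by exact_mod_cast hpos⟩
    · rintro ⟨h1, -⟩
      exact_mod_cast h1
  · rw [hmod]
    constructor
    · intro h
      constructor
      · exact_mod_cast h
      · have : (c0:ℤ) ≤ 2 * n := by exact_mod_cast h0
        omega
    · rintro ⟨h1, -⟩
      exact_mod_cast h1
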